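/- In the quasisymmetric function Hopf algebra with basis F_T (T ⊆ [n], homogeneous degree n+1), define the antipode by s(F_T) = (−1)^{n+1} F_{(complement of T)^∨} where S^∨ = {n+1−i : i ∈ S}. Then on the peak basis Θ_w = 2^{|w|_d+1} Σ_{T, [n]\T ∈ b[I^w]} F_T one has s(Θ_w) = (−1)^{deg w + 1} Θ_{w*}, where w* is the reverse of the cd-word w. -/

import Mathlib

/-- The degree of a cd-word (`false` = c, degree 1; `true` = d, degree 2). -/
def degw (w : List Bool) : ℕ := (w.map (fun b => if b then 2 else 1)).sum

/-- The left sparse set `S_w` of a cd-word: degrees of prefixes ending at each d. -/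
def Sw (w : List Bool) : Finset ℕ :=
  ((Finset.range w.length).filter (fun j => w.getD j false = true)).image
    (fun j => degw (w.take (j + 1)))

/-- `T ∈ b[I^w]`: `T` meets every interval `{i-1, i}` with `i ∈ S_w`. -/
def blocks (w : List Bool) (T : Finset ℕ) : Prop := ∀ i ∈ Sw w, i - 1 ∈ T ∨ i ∈ T

instance (w : List Bool) (T : Finset ℕ) : Decidable (blocks w T) := by
  unfold blocks; infer_instance

/-!
Reversing a cd-word reflects its sparse set: `S_{w*} = {n + 2 - p : p ∈ S_w}` for `n = deg w`,
so `i ↦ n + 1 - i` maps each interval `{p - 1, p}` of `I^w` onto an interval of `I^{w*}`,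
i.e. `(I^w)^∨ = I^{w*}`. Hence `T` blocks `I^w` iff `T^∨` blocks `I^{w*}`. Since `^∨` commutes
with complementation in `[n]`, the involution `T ↦ ([n] \ T)^∨` maps the index set of `Θ_w`
bijectively onto that of `Θ_{w*}`, and `|w*|_d = |w|_d`.
-/

open Finset

lemma degw_append (u v : List Bool) : degw (u ++ v) = degw u + degw v := by
  simp [degw]

lemma degw_reverse (w : List Bool) : degw w.reverse = degw w := by
  simp [degw, List.sum_reverse]

lemma degw_take_add_degw_drop (w : List Bool) (k : ℕ) :
    degw (w.take k) + degw (w.drop k) = degw w := by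
  rw [← degw_append, List.take_append_drop]

lemma degw_take_succ_of_getElem? {w : List Bool} {j : ℕ} (hj : w[j]? = some true) :
    degw (w.take (j + 1)) = degw (w.take j) + 2 := by
  simp [List.take_add_one, hj, degw]

lemma mem_Sw {w : List Bool} {i : ℕ} :
    i ∈ Sw w ↔ ∃ j, w[j]? = some true ∧ degw (w.take (j + 1)) = i := by
  simp only [Sw, mem_image, mem_filter, mem_range, List.getD_eq_getElem?_getD]
  constructor
  · rintro ⟨j, ⟨hj, hd⟩, rfl⟩
    exact ⟨j, by simpa [List.getElem?_eq_getElem hj] using hd, rfl⟩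
  · rintro ⟨j, hj, rfl⟩
    exact ⟨j, ⟨(List.getElem?_eq_some_iff.1 hj).1, by simp [hj]⟩, rfl⟩

lemma two_le_and_le_degw_of_mem_Sw {w : List Bool} {i : ℕ} (hi : i ∈ Sw w) :
    2 ≤ i ∧ i ≤ degw w := by
  obtain ⟨j, hj, rfl⟩ := mem_Sw.1 hi
  have := degw_take_add_degw_drop w (j + 1)
  have := degw_take_succ_of_getElem? hj
  omega

/-- The `j`-th letter of `w` is the `(length - 1 - j)`-th letter of `w*`, and the prefix of `w*`
ending there is the suffix of `w` starting at `j`, of degree `deg w - (p - 2)`. -/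
lemma degw_add_two_sub_mem_Sw_reverse {w : List Bool} {p : ℕ} (hp : p ∈ Sw w) :
    degw w + 2 - p ∈ Sw w.reverse := by
  obtain ⟨j, hj, rfl⟩ := mem_Sw.1 hp
  have hlt : j < w.length := (List.getElem?_eq_some_iff.1 hj).1
  refine mem_Sw.2 ⟨w.length - 1 - j, ?_, ?_⟩
  · rw [List.getElem?_reverse (by omega), ← hj]
    congr 1
    omega
  · have hsuffix : w.length - (w.length - 1 - j + 1) = j := by omega
    rw [List.take_reverse, degw_reverse, hsuffix]
    have := degw_take_add_degw_drop w j
    have := degw_take_succ_of_getElem? hj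
    omega

lemma Sw_reverse (w : List Bool) : Sw w.reverse = (Sw w).image (degw w + 2 - ·) := by
  ext i
  constructor
  · intro hi
    have hi' := degw_add_two_sub_mem_Sw_reverse hi
    rw [List.reverse_reverse, degw_reverse] at hi'
    have := two_le_and_le_degw_of_mem_Sw hi
    rw [degw_reverse] at this
    exact mem_image.2 ⟨_, hi', by omega⟩
  · intro hi
    obtain ⟨p, hp, rfl⟩ := mem_image.1 hi
    exact degw_add_two_sub_mem_Sw_reverse hp

section Dual

/-- The paper's `S^∨ = {n + 1 - i : i ∈ S}`. -/
def dual (n : ℕ) (S : Finset ℕ) : Finset ℕ := S.image (n + 1 - ·)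

variable {n : ℕ} {S : Finset ℕ}

lemma mem_dual {x : ℕ} (hx : x ∈ Icc 1 n) : x ∈ dual n S ↔ n + 1 - x ∈ S := by
  rw [mem_Icc] at hx
  simp only [dual, mem_image]
  constructor
  · rintro ⟨a, ha, rfl⟩
    rwa [show n + 1 - (n + 1 - a) = a by omega]
  · exact fun h => ⟨_, h, by omega⟩

lemma dual_subset_Icc (hS : S ⊆ Icc 1 n) : dual n S ⊆ Icc 1 n := by
  intro x hx
  obtain ⟨a, ha, rfl⟩ := mem_image.1 hx
  have := mem_Icc.1 (hS ha)
  exact mem_Icc.2 ⟨by omega, by omega⟩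

lemma dual_dual (hS : S ⊆ Icc 1 n) : dual n (dual n S) = S := by
  ext x
  by_cases hx : x ∈ Icc 1 n
  · have hx' : n + 1 - x ∈ Icc 1 n := by rw [mem_Icc] at hx ⊢; omega
    rw [mem_dual hx, mem_dual hx', show n + 1 - (n + 1 - x) = x by rw [mem_Icc] at hx; omega]
  · exact iff_of_false (fun h => hx (dual_subset_Icc (dual_subset_Icc hS) h)) (fun h => hx (hS h))

lemma Icc_sdiff_dual_Icc_sdiff (hS : S ⊆ Icc 1 n) :
    Icc 1 n \ dual n (Icc 1 n \ S) = dual n S := by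
  ext x
  by_cases hx : x ∈ Icc 1 n
  · have hx' : n + 1 - x ∈ Icc 1 n := by rw [mem_Icc] at hx ⊢; omega
    simp [mem_sdiff, mem_dual hx, hx, hx']
  · exact iff_of_false (fun h => hx (mem_sdiff.1 h).1) (fun h => hx (dual_subset_Icc hS h))

lemma dual_Icc_sdiff_dual_Icc_sdiff (hS : S ⊆ Icc 1 n) :
    dual n (Icc 1 n \ dual n (Icc 1 n \ S)) = S := by
  rw [Icc_sdiff_dual_Icc_sdiff hS, dual_dual hS]

end Dual

lemma blocks_reverse_dual_iff (w : List Bool) (S : Finset ℕ) :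
    blocks w.reverse (dual (degw w) S) ↔ blocks w S := by
  simp only [blocks, Sw_reverse, forall_mem_image]
  refine forall₂_congr fun p hp => ?_
  obtain ⟨h2, hle⟩ := two_le_and_le_degw_of_mem_Sw hp
  rw [mem_dual (by rw [mem_Icc]; omega), mem_dual (by rw [mem_Icc]; omega),
    show degw w + 1 - (degw w + 2 - p - 1) = p by omega,
    show degw w + 1 - (degw w + 2 - p) = p - 1 by omega, or_comm]

/-- The index set `{T ⊆ [n] : T, [n] \ T ∈ b[I^w]}` of the sum defining `Θ_w`. -/
def peakSupport (n : ℕ) (w : List Bool) : Finset (Finset ℕ) :=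
  (Icc 1 n).powerset.filter (fun T => blocks w T ∧ blocks w (Icc 1 n \ T))

lemma dual_Icc_sdiff_mem_peakSupport_reverse {n : ℕ} {w : List Bool} (hw : degw w = n)
    {T : Finset ℕ} (hT : T ∈ peakSupport n w) :
    dual n (Icc 1 n \ T) ∈ peakSupport n w.reverse := by
  subst hw
  simp only [peakSupport, mem_filter, mem_powerset] at hT ⊢
  obtain ⟨hTsub, hT, hTc⟩ := hT
  rw [Icc_sdiff_dual_Icc_sdiff hTsub, blocks_reverse_dual_iff, blocks_reverse_dual_iff]
  exact ⟨dual_subset_Icc sdiff_subset, hTc, hT⟩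

lemma subset_Icc_of_mem_peakSupport {n : ℕ} {w : List Bool} {T : Finset ℕ}
    (hT : T ∈ peakSupport n w) : T ⊆ Icc 1 n :=
  mem_powerset.1 (mem_filter.1 hT).1

/-- in the degree-`(n+1)` component of the quasisymmetric functions,
with fundamental basis `F_T` (modeled by the basis vectors `Finsupp.single T 1`,
`T ⊆ [n]`), let the antipode `s` act by `s(F_T) = (-1)^{n+1} F_{(complement T)^∨}`
with `S^∨ = {n+1-i : i ∈ S}`.  Then on
`Θ_w = 2^{|w|_d+1} Σ_{T, [n]\T ∈ b[I^w]} F_T` one has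
`s(Θ_w) = (-1)^{deg w + 1} Θ_{w*}` where `w*` is the reverse of `w`. -/
theorem stmt_18 (n : ℕ) (w : List Bool) (hw : degw w = n)
    (Θ : List Bool → (Finset ℕ →₀ ℚ))
    (hΘ : ∀ u : List Bool, Θ u = (2 : ℚ) ^ (u.count true + 1) •
      ∑ T ∈ (Finset.Icc 1 n).powerset.filter
          (fun T => blocks u T ∧ blocks u (Finset.Icc 1 n \ T)),
        Finsupp.single T (1 : ℚ))
    (s : (Finset ℕ →₀ ℚ) →ₗ[ℚ] (Finset ℕ →₀ ℚ))
    (hs : ∀ T : Finset ℕ, s (Finsupp.single T 1)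
      = ((-1 : ℚ) ^ (n + 1)) •
          Finsupp.single ((Finset.Icc 1 n \ T).image (fun i => n + 1 - i)) 1) :
    s (Θ w) = ((-1 : ℚ) ^ (degw w + 1)) • Θ w.reverse := by
  rw [hΘ, hΘ, map_smul, map_sum, List.count_reverse, hw]
  simp only [hs]
  rw [← smul_sum, smul_comm]
  congr 2
  have hw' : degw w.reverse = n := by rw [degw_reverse, hw]
  refine sum_nbij' (dual n <| Icc 1 n \ ·) (dual n <| Icc 1 n \ ·)
    (fun T hT => dual_Icc_sdiff_mem_peakSupport_reverse hw hT)
    (fun T hT => by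
      have := dual_Icc_sdiff_mem_peakSupport_reverse hw' hT
      rwa [List.reverse_reverse] at this)
    (fun T hT => dual_Icc_sdiff_dual_Icc_sdiff (subset_Icc_of_mem_peakSupport hT))
    (fun T hT => dual_Icc_sdiff_dual_Icc_sdiff (subset_Icc_of_mem_peakSupport hT))
    (fun _ _ => rfl)
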